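/- The Alexander polynomial Δ(t) = -n t + (2n+1) - n t^{-1} factors as f(t)·f(t^{-1}) for some polynomial f with integer coefficients if and only if n = m(m+1) for some integer m. -/

import Mathlib

/-!
Evaluating `f(t) f(t⁻¹) = -n t + (2n+1) - n t⁻¹` at `t = -1` gives `f(-1)² = 4n + 1`, and an
integer `4n + 1` is a square only when it is `(2m+1)² = 4m(m+1) + 1`. Conversely, for
`n = m(m+1)` the factor `f(t) = m t - (m+1)` works.
-/

open LaurentPolynomial

namespace LaurentPolynomial

variable {R S : Type*} [CommSemiring R] [CommSemiring S]

theorem eval₂_invert (f : R →+* S) (x : Sˣ) (p : R[T;T⁻¹]) :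
    eval₂ f x (invert p) = eval₂ f x⁻¹ p := by
  induction p using LaurentPolynomial.induction_on' with
  | add p q hp hq => simp only [map_add, hp, hq]
  | C_mul_T k r => simp only [map_mul, invert_C, invert_T, eval₂_C, eval₂_T, zpow_neg, inv_zpow']

end LaurentPolynomial

noncomputable def whiteheadAlexander {R : Type*} [CommRing R] (n : R) : R[T;T⁻¹] :=
  C (-n) * T 1 + C (2 * n + 1) + C (-n) * T (-1)

section WhiteheadAlexander

variable {R : Type*} [CommRing R]

theorem eval₂_neg_one_whiteheadAlexander (n : R) :
    eval₂ (RingHom.id R) (-1) (whiteheadAlexander n) = 4 * n + 1 := by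
  simp only [whiteheadAlexander, map_add, map_mul, eval₂_C, eval₂_T, RingHom.id_apply]
  norm_num
  ring

theorem whiteheadAlexander_mul_add_one (m : R) :
    whiteheadAlexander (m * (m + 1)) =
      (C m * T 1 - C (m + 1)) * invert (C m * T 1 - C (m + 1)) := by
  have hT : (T 1 * T (-1) : R[T;T⁻¹]) = 1 := by rw [← T_add]; norm_num
  simp only [whiteheadAlexander, map_sub, map_mul, invert_C, invert_T, map_neg, map_add, map_one,
    map_ofNat]
  linear_combination (-(C m * C m) : R[T;T⁻¹]) * hT

end WhiteheadAlexander

theorem Int.exists_eq_mul_add_one_of_four_mul_add_one_eq_sq {n a : ℤ} (h : 4 * n + 1 = a ^ 2) :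
    ∃ m, n = m * (m + 1) := by
  obtain ⟨c, rfl | rfl⟩ := Int.even_or_odd' a
  · have h4 : 4 * n + 1 = 4 * (c * c) := by linear_combination h
    generalize c * c = d at h4
    omega
  · exact ⟨c, by linarith⟩

/-- The Alexander polynomial `Δ(t) = -n t + (2n+1) - n t⁻¹` factors as `f(t)·f(t⁻¹)`
for some integer polynomial `f` iff `n = m(m+1)` for some integer `m`. -/
theorem alexander_whitehead_fox_milnor (n : ℤ) :
    (∃ f : Polynomial ℤ,
        C (-n) * T 1 + C (2 * n + 1) + C (-n) * T (-1) =
          f.toLaurent * invert f.toLaurent) ↔ ∃ m : ℤ, n = m * (m + 1) := by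
  change (∃ f : Polynomial ℤ, whiteheadAlexander n = f.toLaurent * invert f.toLaurent) ↔ _
  constructor
  · rintro ⟨f, hf⟩
    have h := congrArg (eval₂ (RingHom.id ℤ) (-1)) hf
    rw [eval₂_neg_one_whiteheadAlexander, map_mul, eval₂_invert, inv_neg, inv_one,
      eval₂_toLaurent, ← sq] at h
    exact Int.exists_eq_mul_add_one_of_four_mul_add_one_eq_sq h
  · rintro ⟨m, rfl⟩
    refine ⟨Polynomial.C m * Polynomial.X - Polynomial.C (m + 1), ?_⟩
    simpa using whiteheadAlexander_mul_add_one m
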